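/- arXiv:2311.09011 — 3 statements merged into one kernel-verified Lean document; each statement's English description precedes it below -/
import Mathlib

section
/- Let Ω be a finite state set and P ⊆ Δ(Ω) a finite set of posteriors. There exists a finite action set A = {a_p}_{p∈P} ∪ {a_{p,ω}}_{p∈P,ω∈Ω} of size (|Ω|+1)|P| and a utility function u_R : Ω × A → ℝ such that: (1) for each p ∈ P, the action a_p maximizes the expected utility E_{ω∼p}[u_R(ω,·)] over all of A, and no a_{p'} with p' ≠ p is a maximizer at posterior p; (2) for every y ∈ Δ(Ω) \ P and every p ∈ P, the action a_p does not maximize E_{ω∼y}[u_R(ω,·)] over A. -/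
/-- Receiver utility design: for any finite set `P` of posteriors over a finite state set
`Ω`, there is an action set `{a_p}_{p∈P} ∪ {a_{p,ω}}_{p∈P,ω∈Ω}` of size `(|Ω|+1)·|P|`
and a receiver utility `u_R` such that: (1) at every posterior `p ∈ P` the action `a_p`
is a best response and every `a_{p'}` with `p' ≠ p` is strictly worse than `a_p`;
(2) at every posterior `y ∉ P` in the simplex, no action `a_p` is a best response. -/
theorem stmt9 {Ω : Type*} [Fintype Ω] [DecidableEq Ω]
    (P : Finset (Ω → ℝ)) (hP : ∀ p ∈ P, p ∈ stdSimplex ℝ Ω) :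
    Fintype.card ({p // p ∈ P} ⊕ ({p // p ∈ P} × Ω)) = (Fintype.card Ω + 1) * P.card ∧
    ∃ uR : Ω → ({p // p ∈ P} ⊕ ({p // p ∈ P} × Ω)) → ℝ,
      (∀ p : {p // p ∈ P},
        (∀ a, ∑ ω, (p : Ω → ℝ) ω * uR ω a ≤ ∑ ω, (p : Ω → ℝ) ω * uR ω (Sum.inl p)) ∧
        (∀ p' : {p // p ∈ P}, p' ≠ p →
          ∑ ω, (p : Ω → ℝ) ω * uR ω (Sum.inl p') < ∑ ω, (p : Ω → ℝ) ω * uR ω (Sum.inl p))) ∧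
      (∀ y ∈ stdSimplex ℝ Ω, y ∉ P → ∀ p : {p // p ∈ P},
        ∃ a, ∑ ω, y ω * uR ω (Sum.inl p) < ∑ ω, y ω * uR ω a) := by
  classical
  -- abbreviations
  set C : (Ω → ℝ) → ℝ := fun p => ∑ ω, p ω * p ω with hC
  set B : (Ω → ℝ) → (Ω → ℝ) → ℝ := fun y p => ∑ ω, y ω * p ω with hB
  set d : (Ω → ℝ) → (Ω → ℝ) → ℝ := fun p p' => ∑ ω, (p ω - p' ω) * (p ω - p' ω) with hd'
  have hd : ∀ p p' : Ω → ℝ, d p p' = C p + C p' - 2 * B p p' := by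
    intro p p'
    simp only [hd', hC, hB, Finset.mul_sum, ← Finset.sum_add_distrib,
      ← Finset.sum_sub_distrib]
    exact Finset.sum_congr rfl fun ω _ => by ring
  have hdnonneg : ∀ p p' : Ω → ℝ, 0 ≤ d p p' :=
    fun p p' => Finset.sum_nonneg fun ω _ => mul_self_nonneg _
  have hdpos : ∀ p p' : Ω → ℝ, p ≠ p' → 0 < d p p' := by
    intro p p' hne
    obtain ⟨ω, hω⟩ := Function.ne_iff.mp hne
    refine Finset.sum_pos' (fun ω _ => mul_self_nonneg _) ⟨ω, Finset.mem_univ ω, ?_⟩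
    exact mul_self_pos.mpr (sub_ne_zero.mpr hω)
  -- the perturbation size ε
  have hεex : ∃ ε : ℝ, 0 < ε ∧ ∀ p ∈ P, ∀ p' ∈ P, p ≠ p' → ε ≤ d p p' := by
    set D := ((P ×ˢ P).filter fun q => q.1 ≠ q.2).image fun q => d q.1 q.2 with hD
    by_cases h : D.Nonempty
    · refine ⟨D.min' h, ?_, ?_⟩
      · obtain ⟨q, hq, hqe⟩ := Finset.mem_image.mp (D.min'_mem h)
        rw [Finset.mem_filter] at hq
        rw [← hqe]; exact hdpos _ _ hq.2
      · intro p hp p' hp' hne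
        exact D.min'_le _ (Finset.mem_image.mpr ⟨(p, p'), by
          simp [Finset.mem_filter, Finset.mem_product, hp, hp', hne], rfl⟩)
    · refine ⟨1, one_pos, fun p hp p' hp' hne => absurd ?_ h⟩
      exact ⟨d p p', Finset.mem_image.mpr ⟨(p, p'), by
        simp [Finset.mem_filter, Finset.mem_product, hp, hp', hne], rfl⟩⟩
  obtain ⟨ε, hε, hεle⟩ := hεex
  -- the utility
  set uR : Ω → ({p // p ∈ P} ⊕ ({p // p ∈ P} × Ω)) → ℝ := fun ω a =>
    Sum.elim (fun p : {p // p ∈ P} => 2 * (p : Ω → ℝ) ω - C (p : Ω → ℝ))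
      (fun q : {p // p ∈ P} × Ω => 2 * (q.1 : Ω → ℝ) ω - C q.1 +
        ε * ((if ω = q.2 then 1 else 0) - (q.1 : Ω → ℝ) q.2)) a with huR
  -- expected utilities
  have hE1 : ∀ y : Ω → ℝ, (∑ ω, y ω) = 1 → ∀ p : {p // p ∈ P},
      ∑ ω, y ω * uR ω (Sum.inl p) = 2 * B y p - C p := by
    intro y hy p
    have h1 : ∑ ω, y ω * uR ω (Sum.inl p)
        = 2 * (∑ ω, y ω * (p : Ω → ℝ) ω) - (∑ ω, y ω) * C (p : Ω → ℝ) := by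
      simp only [huR, Sum.elim_inl, Finset.mul_sum, Finset.sum_mul, ← Finset.sum_sub_distrib]
      exact Finset.sum_congr rfl fun ω _ => by ring
    rw [h1, hy]; ring
  have hE2 : ∀ y : Ω → ℝ, (∑ ω, y ω) = 1 → ∀ p : {p // p ∈ P}, ∀ ω₀ : Ω,
      ∑ ω, y ω * uR ω (Sum.inr (p, ω₀))
        = 2 * B y p - C p + ε * (y ω₀ - (p : Ω → ℝ) ω₀) := by
    intro y hy p ω₀
    have h1 : ∑ ω, y ω * uR ω (Sum.inr (p, ω₀))
        = ∑ ω, y ω * uR ω (Sum.inl p)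
          + (ε * ((∑ ω, y ω * (if ω = ω₀ then (1:ℝ) else 0)) - (∑ ω, y ω) * (p : Ω → ℝ) ω₀)) := by
      simp only [huR, Sum.elim_inl, Sum.elim_inr, Finset.mul_sum, Finset.sum_mul,
        ← Finset.sum_add_distrib, ← Finset.sum_sub_distrib]
      exact Finset.sum_congr rfl fun ω _ => by ring
    have h2 : (∑ ω, y ω * (if ω = ω₀ then (1:ℝ) else 0)) = y ω₀ := by
      simp [mul_ite]
    rw [h1, h2, hy, hE1 y hy p]; ring
  have hBC : ∀ p : Ω → ℝ, B p p = C p := fun p => rfl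
  refine ⟨by simp [Fintype.card_sum, Fintype.card_prod, Fintype.card_coe]; ring, uR, ?_, ?_⟩
  · intro p
    have hpP := p.2
    have hps := hP _ hpP
    have hpsum : (∑ ω, (p : Ω → ℝ) ω) = 1 := hps.2
    have key : ∀ p' : {p // p ∈ P},
        2 * B (p : Ω → ℝ) (p' : Ω → ℝ) - C (p' : Ω → ℝ)
          = C (p : Ω → ℝ) - d (p : Ω → ℝ) (p' : Ω → ℝ) := by
      intro p'; rw [hd]; ring
    constructor
    · intro a
      rw [hE1 _ hpsum p, hBC]
      match a with
      | Sum.inl p' =>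
        rw [hE1 _ hpsum p', key p']
        have := hdnonneg (p : Ω → ℝ) (p' : Ω → ℝ)
        linarith
      | Sum.inr (p', ω₀) =>
        rw [hE2 _ hpsum p' ω₀, key p']
        by_cases h : (p : Ω → ℝ) = (p' : Ω → ℝ)
        · have hd0 : d ((p : Ω → ℝ)) ((p' : Ω → ℝ)) = 0 := by
            rw [h]; simp [hd']
          have h0 : (p : Ω → ℝ) ω₀ - (p' : Ω → ℝ) ω₀ = 0 := by rw [h, sub_self]
          rw [hd0, h0, mul_zero]; linarith
        · have hdd : ε ≤ d (p : Ω → ℝ) (p' : Ω → ℝ) := hεle _ p.2 _ p'.2 h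
          have ht1 : (p : Ω → ℝ) ω₀ - (p' : Ω → ℝ) ω₀ ≤ 1 := by
            have h1 : (p : Ω → ℝ) ω₀ ≤ 1 := by
              calc (p : Ω → ℝ) ω₀ ≤ ∑ ω, (p : Ω → ℝ) ω :=
                Finset.single_le_sum (fun ω _ => hps.1 ω) (Finset.mem_univ ω₀)
              _ = 1 := hpsum
            have h2 : 0 ≤ (p' : Ω → ℝ) ω₀ := (hP _ p'.2).1 ω₀
            linarith
          have : ε * ((p : Ω → ℝ) ω₀ - (p' : Ω → ℝ) ω₀) ≤ ε * 1 :=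
            mul_le_mul_of_nonneg_left ht1 hε.le
          linarith
    · intro p' hne
      rw [hE1 _ hpsum p', hE1 _ hpsum p, hBC, key p']
      have hfe : (p : Ω → ℝ) ≠ (p' : Ω → ℝ) := fun h => hne (Subtype.ext h.symm)
      have := hdpos _ _ hfe
      linarith
  · intro y hy hyP p
    have hysum : (∑ ω, y ω) = 1 := hy.2
    have hne : y ≠ (p : Ω → ℝ) := fun h => hyP (h ▸ p.2)
    have hω₀ : ∃ ω₀, (p : Ω → ℝ) ω₀ < y ω₀ := by
      by_contra h
      push_neg at h
      have hsum : (∑ ω, y ω) = ∑ ω, (p : Ω → ℝ) ω := by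
        rw [hysum, (hP _ p.2).2]
      have heq : ∀ ω ∈ Finset.univ, y ω = (p : Ω → ℝ) ω :=
        (Finset.sum_eq_sum_iff_of_le fun ω _ => h ω).mp hsum
      exact hne (funext fun ω => heq ω (Finset.mem_univ ω))
    obtain ⟨ω₀, hω₀⟩ := hω₀
    refine ⟨Sum.inr (p, ω₀), ?_⟩
    rw [hE1 _ hysum p, hE2 _ hysum p ω₀]
    have : 0 < ε * (y ω₀ - (p : Ω → ℝ) ω₀) := mul_pos hε (by linarith)
    linarith
end

section
/- Let v(q) = max_{a∈A} Σ_ω q(ω)u_R(ω,a) and suppose a distribution over posteriors {p_σ} has mean μ and E_σ[v(p_σ)] = v(μ). If an action a* attains the maximum at μ, then a* attains the maximum v(p_σ) at every posterior p_σ in the support of the distribution. -/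
/-! The value `v(q) = max_a ⟨q, u_a⟩` is a maximum of linear functions of `q`, so for any split
`μ = Σ w_i p_i` we have `E[v(p_i)] ≥ E[⟨p_i, u_{a*}⟩] = ⟨μ, u_{a*}⟩ = v(μ)`, the inequality holding
term by term. Equality of the two ends therefore forces `v(p_i) = ⟨p_i, u_{a*}⟩` whenever
`w_i > 0`. -/

open Finset

lemma sum_mul_eq_sum_mul_sum_of_eq_sum {ι Ω : Type*} [Fintype ι] [Fintype Ω]
    (w : ι → ℝ) (p : ι → Ω → ℝ) (μ u : Ω → ℝ) (hμ : ∀ ω, μ ω = ∑ i, w i * p i ω) :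
    ∑ ω, μ ω * u ω = ∑ i, w i * ∑ ω, p i ω * u ω := by
  simp only [hμ, sum_mul, mul_sum, mul_assoc]
  exact sum_comm

lemma ciSup_eq_of_forall_le {A : Type*} (f : A → ℝ) (a₀ : A) (h : ∀ a, f a ≤ f a₀) :
    ⨆ a, f a = f a₀ :=
  IsGreatest.csSup_eq ⟨Set.mem_range_self a₀, Set.forall_mem_range.2 h⟩

lemma le_of_sum_mul_ciSup_le {ι A : Type*} [Fintype ι] [Finite A]
    (w : ι → ℝ) (hw0 : ∀ i, 0 ≤ w i) (g : ι → A → ℝ) (astar : A)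
    (hle : ∑ i, w i * ⨆ a, g i a ≤ ∑ i, w i * g i astar)
    (i : ι) (hi : 0 < w i) (a : A) : g i a ≤ g i astar := by
  have hbdd : ∀ j, BddAbove (Set.range (g j)) := fun j => (Set.finite_range _).bddAbove
  have hterm : ∀ j ∈ univ, w j * g j astar ≤ w j * ⨆ a, g j a :=
    fun j _ => mul_le_mul_of_nonneg_left (le_ciSup (hbdd j) astar) (hw0 j)
  have hsum : ∑ j, w j * g j astar = ∑ j, w j * ⨆ a, g j a :=
    le_antisymm (sum_le_sum hterm) hle
  have hmax : g i astar = ⨆ a, g i a :=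
    mul_left_cancel₀ hi.ne' ((sum_eq_sum_iff_of_le hterm).1 hsum i (mem_univ i))
  exact hmax ▸ le_ciSup (hbdd i) a

theorem stmt14_general {Ω A : Type*} [Fintype Ω] [Fintype A] {ι : Type*} [Fintype ι]
    (uR : Ω → A → ℝ)
    (p : ι → (Ω → ℝ))
    (w : ι → ℝ) (hw0 : ∀ i, 0 ≤ w i)
    (μ : Ω → ℝ) (hμ : ∀ ω, μ ω = ∑ i, w i * p i ω)
    (hval : ∑ i, w i * (⨆ a : A, ∑ ω, p i ω * uR ω a) = ⨆ a : A, ∑ ω, μ ω * uR ω a)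
    (astar : A) (hastar : ∀ a, ∑ ω, μ ω * uR ω a ≤ ∑ ω, μ ω * uR ω astar) :
    ∀ i, 0 < w i → ∀ a, ∑ ω, p i ω * uR ω a ≤ ∑ ω, p i ω * uR ω astar := by
  refine le_of_sum_mul_ciSup_le w hw0 (fun i a => ∑ ω, p i ω * uR ω a) astar (le_of_eq ?_)
  rw [hval, ciSup_eq_of_forall_le _ astar hastar]
  exact sum_mul_eq_sum_mul_sum_of_eq_sum w p μ (uR · astar) hμ

/-- Let `v(q) = max_a Σ_ω q(ω)·u_R(ω,a)` and let a split of the prior `μ` into posteriors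
`p i` (with weights `w i`) satisfy `E[v(p_σ)] = v(μ)`. If an action `astar` attains the
maximum at `μ`, then `astar` attains the maximum at every posterior in the support. -/
theorem stmt14 {Ω A : Type*} [Fintype Ω] [Fintype A] [Nonempty A] {ι : Type*} [Fintype ι]
    (uR : Ω → A → ℝ)
    (p : ι → (Ω → ℝ)) (hp : ∀ i, p i ∈ stdSimplex ℝ Ω)
    (w : ι → ℝ) (hw0 : ∀ i, 0 ≤ w i) (hw1 : ∑ i, w i = 1)
    (μ : Ω → ℝ) (hμ : ∀ ω, μ ω = ∑ i, w i * p i ω)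
    (hval : ∑ i, w i * (⨆ a : A, ∑ ω, p i ω * uR ω a) = ⨆ a : A, ∑ ω, μ ω * uR ω a)
    (astar : A) (hastar : ∀ a, ∑ ω, μ ω * uR ω a ≤ ∑ ω, μ ω * uR ω astar) :
    ∀ i, 0 < w i → ∀ a, ∑ ω, p i ω * uR ω a ≤ ∑ ω, p i ω * uR ω astar :=
  stmt14_general uR p w hw0 μ hμ hval astar hastar
end

section
/- Consider a cheap talk game with two receiver actions a₁, a₂, and normalize u_R(ω, a₂) = 0 for all ω. Partition the states into Ω¹∪Ω¹₂ (where the sender weakly prefers a₁, with receiver-preference tiebreak) and Ω²∪Ω²₁ (where the sender weakly prefers a₂). If Σ_{ω∈Ω¹∪Ω¹₂} u_R(ω,a₁)μ(ω) ≥ 0 and Σ_{ω∈Ω²∪Ω²₁} u_R(ω,a₁)μ(ω) ≤ 0, then the sender-greedy signaling policy (sending signal σ₁ in states of Ω¹∪Ω¹₂ and σ₂ in states of Ω²∪Ω²₁) together with the receiver strategy playing a₁ on σ₁ and a₂ on σ₂ constitutes a cheap talk equilibrium. -/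
open Finset

/-- The Bayesian posterior probability of state `ω` upon receiving signal `σ`,
given prior `μ` and signaling policy `π`. -/
noncomputable def posterior {Ω S : Type*} [Fintype Ω]
    (μ : Ω → ℝ) (π : Ω → S → ℝ) (σ : S) (ω : Ω) : ℝ :=
  (π ω σ * μ ω) / ∑ ω', π ω' σ * μ ω'

/-- `(π, s)` is a cheap talk (perfect Bayesian) equilibrium: (i) in every state, every
signal sent with positive probability maximizes the sender's expected utility among all
signals in the support of `π`; (ii) for every signal in the support of `π`, every action
played with positive probability maximizes the receiver's expected utility under the
Bayesian posterior. -/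
noncomputable def CheapTalkEq {Ω S A : Type*} [Fintype Ω] [Fintype A]
    (μ : Ω → ℝ) (uS uR : Ω → A → ℝ) (π : Ω → S → ℝ) (s : S → A → ℝ) : Prop :=
  (∀ ω σ, 0 < π ω σ → ∀ σ', (∃ ω', 0 < π ω' σ') →
      ∑ a, s σ' a * uS ω a ≤ ∑ a, s σ a * uS ω a) ∧
  (∀ σ, (∃ ω, 0 < π ω σ) → ∀ a, 0 < s σ a → ∀ a',
      ∑ ω, posterior μ π σ ω * uR ω a' ≤ ∑ ω, posterior μ π σ ω * uR ω a)

open Classical in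
/-- Binary-action cheap talk: with `u_R(·, a₂)` normalized to `0`, if the receiver weakly
prefers `a₁` on the aggregate of states where the sender (greedily, with receiver
tiebreak) recommends `a₁`, and weakly prefers `a₂` on the complementary states, then the
sender-greedy signaling policy together with the obedient receiver strategy is a cheap
talk equilibrium. Here actions and signals are `Fin 2`, action/signal `0` is `a₁`. -/
theorem stmt17 {Ω : Type*} [Fintype Ω]
    (μ : Ω → ℝ) (hμ0 : ∀ ω, 0 ≤ μ ω) (hμ1 : ∑ ω, μ ω = 1)
    (uS uR : Ω → Fin 2 → ℝ)
    (hnorm : ∀ ω, uR ω 1 = 0)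
    (hnontriv : ∀ ω, ¬ (uS ω 0 = uS ω 1 ∧ uR ω 0 = uR ω 1))
    (h1 : 0 ≤ ∑ ω ∈ Finset.univ.filter
        (fun ω => uS ω 1 < uS ω 0 ∨ (uS ω 0 = uS ω 1 ∧ 0 < uR ω 0)), uR ω 0 * μ ω)
    (h2 : ∑ ω ∈ Finset.univ.filter
        (fun ω => ¬ (uS ω 1 < uS ω 0 ∨ (uS ω 0 = uS ω 1 ∧ 0 < uR ω 0))), uR ω 0 * μ ω ≤ 0) :
    CheapTalkEq μ uS uR
      (fun ω σ => if (uS ω 1 < uS ω 0 ∨ (uS ω 0 = uS ω 1 ∧ 0 < uR ω 0))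
        then (if σ = (0 : Fin 2) then 1 else 0)
        else (if σ = (1 : Fin 2) then 1 else 0))
      (fun σ a => if a = σ then 1 else 0) := by
  classical
  set P : Ω → Prop := fun ω => uS ω 1 < uS ω 0 ∨ (uS ω 0 = uS ω 1 ∧ 0 < uR ω 0) with hP
  set π : Ω → Fin 2 → ℝ := fun ω σ => if P ω
        then (if σ = (0 : Fin 2) then (1:ℝ) else 0)
        else (if σ = (1 : Fin 2) then 1 else 0) with hπ
  constructor
  · intro ω σ hpos σ' _
    have hs : ∀ τ : Fin 2, ∑ a, (if a = τ then (1:ℝ) else 0) * uS ω a = uS ω τ := by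
      intro τ; fin_cases τ <;> simp [Fin.sum_univ_two]
    simp only [hs]
    by_cases hPω : P ω
    · have hσ : σ = 0 := by
        by_contra h
        simp [hπ, hPω, h] at hpos
      have h01 : uS ω 1 ≤ uS ω 0 := by
        rcases hPω with h | ⟨h, _⟩
        · exact h.le
        · exact h.ge
      fin_cases σ' <;> simp [hσ, h01]
    · have hσ : σ = 1 := by
        by_contra h
        simp [hπ, hPω, h] at hpos
      have h01 : uS ω 0 ≤ uS ω 1 := by
        simp only [hP, not_or, not_lt] at hPω
        exact hPω.1
      fin_cases σ' <;> simp [hσ, h01]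
  · intro σ _ a ha a'
    have haσ : a = σ := by
      by_contra h
      simp [h] at ha
    subst haσ
    have hsum : ∀ (τ b : Fin 2), ∑ ω, posterior μ π τ ω * uR ω b
        = (∑ ω, π ω τ * μ ω * uR ω b) / (∑ ω', π ω' τ * μ ω') := by
      intro τ b
      rw [Finset.sum_div]
      refine Finset.sum_congr rfl fun ω _ => ?_
      unfold posterior
      rw [div_mul_eq_mul_div]
    fin_cases a <;> fin_cases a'
    · simp
    · -- σ = 0, a' = 1
      simp only [Fin.mk_zero, Fin.mk_one, hsum, hnorm, mul_zero, Finset.sum_const_zero, zero_div]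
      apply div_nonneg
      · have : ∑ ω, π ω 0 * μ ω * uR ω 0
            = ∑ ω ∈ Finset.univ.filter P, uR ω 0 * μ ω := by
          rw [Finset.sum_filter]
          refine Finset.sum_congr rfl fun ω _ => ?_
          by_cases h : P ω <;> simp only [hP] at h <;> simp [hπ, hP, h] <;> ring
        rw [this]; exact h1
      · apply Finset.sum_nonneg
        intro ω _
        by_cases h : P ω <;> simp [hπ, h, hμ0 ω]
    · -- σ = 1, a' = 0
      simp only [Fin.mk_zero, Fin.mk_one, hsum, hnorm, mul_zero, Finset.sum_const_zero, zero_div]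
      apply div_nonpos_of_nonpos_of_nonneg
      · have : ∑ ω, π ω 1 * μ ω * uR ω 0
            = ∑ ω ∈ Finset.univ.filter (fun ω => ¬ P ω), uR ω 0 * μ ω := by
          rw [Finset.sum_filter]
          refine Finset.sum_congr rfl fun ω _ => ?_
          by_cases h : P ω <;> simp only [hP] at h <;> simp [hπ, hP, h] <;> ring
        rw [this]; exact h2
      · apply Finset.sum_nonneg
        intro ω _
        by_cases h : P ω <;> simp [hπ, h, hμ0 ω]
    · simp
end
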